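/- arXiv:1411.1569 — 2 statements merged into one kernel-verified Lean document; each statement's English description precedes it below -/
import Mathlib

section
/- For M×M positive semidefinite Hermitian matrices A and B, tr(AB) ≥ Σ_{m=1}^M λ_m(A) λ_{M−m+1}(B), where λ_1 ≥ ... ≥ λ_M denote eigenvalues in decreasing order. -/
/-!
Diagonalise `A = U diag(a) U*` and `B = V diag(b) V*`. With the unitary `W = U* V`,
`tr (A B) = ∑ i j, a i * b j * ‖W i j‖ ^ 2`, and the matrix `(‖W i j‖ ^ 2)` is doubly
stochastic. By Birkhoff's theorem a linear functional on doubly stochastic matrices is minimised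
at a permutation matrix, so `tr (A B) ≥ ∑ i, a i * b (π i)` for some `π`; the rearrangement
inequality bounds this below by pairing the decreasingly ordered `a` with the increasingly
ordered `b`.
-/

open Finset Matrix

namespace Matrix

variable {n 𝕜 : Type*} [Fintype n] [DecidableEq n] [RCLike 𝕜]

lemma of_norm_sq_mem_doublyStochastic {W : Matrix n n 𝕜} (hW : W ∈ unitaryGroup n 𝕜) :
    (of fun i j => ‖W i j‖ ^ 2) ∈ doublyStochastic ℝ n := by
  rw [mem_doublyStochastic_iff_sum]
  refine ⟨fun _ _ => sq_nonneg _, fun i => ?_, fun j => ?_⟩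
  · have h := congr_fun₂ (mem_unitaryGroup_iff.mp hW) i i
    simp only [mul_apply, star_apply, RCLike.star_def, RCLike.mul_conj, one_apply_eq] at h
    exact_mod_cast h
  · have h := congr_fun₂ (mem_unitaryGroup_iff'.mp hW) j j
    simp only [mul_apply, star_apply, RCLike.star_def, RCLike.conj_mul, one_apply_eq] at h
    exact_mod_cast h

lemma trace_diagonal_mul_mul_diagonal_mul_star (a b : n → ℝ) (W : Matrix n n 𝕜) :
    (diagonal (RCLike.ofReal ∘ a) * W * diagonal (RCLike.ofReal ∘ b) * star W).trace
      = ((a ⬝ᵥ (of fun i j => ‖W i j‖ ^ 2) *ᵥ b : ℝ) : 𝕜) := by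
  simp only [trace, diag, dotProduct, mulVec, of_apply, mul_sum]
  push_cast
  refine sum_congr rfl fun i _ => ?_
  rw [mul_apply]
  refine sum_congr rfl fun j _ => ?_
  simp only [mul_diagonal, diagonal_mul, star_apply, RCLike.star_def, Function.comp_apply]
  rw [← RCLike.mul_conj]
  ring

lemma IsHermitian.exists_mem_doublyStochastic_trace_mul_eq {A B : Matrix n n 𝕜}
    (hA : A.IsHermitian) (hB : B.IsHermitian) :
    ∃ S ∈ doublyStochastic ℝ n,
      (A * B).trace = ((hA.eigenvalues ⬝ᵥ S *ᵥ hB.eigenvalues : ℝ) : 𝕜) := by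
  let W : unitaryGroup n 𝕜 := star hA.eigenvectorUnitary * hB.eigenvectorUnitary
  refine ⟨_, of_norm_sq_mem_doublyStochastic W.2, ?_⟩
  rw [← trace_diagonal_mul_mul_diagonal_mul_star]
  conv_lhs => rw [hA.spectral_theorem, hB.spectral_theorem]
  simp only [W, Unitary.conjStarAlgAut_apply, MulMemClass.coe_mul, Unitary.coe_star, star_mul,
    star_star, Matrix.mul_assoc]
  rw [trace_mul_comm (hA.eigenvectorUnitary : Matrix n n 𝕜)]
  simp only [Matrix.mul_assoc]

lemma exists_perm_sum_mul_comp_le_dotProduct_mulVec {S : Matrix n n ℝ}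
    (hS : S ∈ doublyStochastic ℝ n) (x y : n → ℝ) :
    ∃ π : Equiv.Perm n, ∑ i, x i * y (π i) ≤ x ⬝ᵥ S *ᵥ y := by
  let f : Matrix n n ℝ →ₗ[ℝ] ℝ :=
    LinearMap.applyₗ y ∘ₗ LinearMap.applyₗ x ∘ₗ (toLinearMap₂' ℝ).toLinearMap
  rw [← SetLike.mem_coe, doublyStochastic_eq_convexHull_permMatrix] at hS
  obtain ⟨_, ⟨π, rfl⟩, h⟩ :=
    (f.concaveOn convex_univ).exists_le_of_mem_convexHull (Set.subset_univ _) hS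
  exact ⟨π, by simpa [f, toLinearMap₂'_apply', permMatrix_mulVec, dotProduct] using h⟩

end Matrix

lemma Fin.sum_mul_rev_le_sum_mul_comp_perm {α : Type*} [CommRing α] [LinearOrder α]
    [IsStrictOrderedRing α] {M : ℕ} {x y : Fin M → α} {σ τ : Equiv.Perm (Fin M)}
    (hσ : Antitone (x ∘ σ)) (hτ : Antitone (y ∘ τ)) (π : Equiv.Perm (Fin M)) :
    ∑ m, x (σ m) * y (τ m.rev) ≤ ∑ i, x i * y (π i) := by
  have h : Antivary (x ∘ σ) (y ∘ τ ∘ Fin.rev) := hσ.antivary (hτ.comp Fin.rev_anti)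
  let ρ := (σ.trans π).trans (τ.symm.trans Fin.revPerm)
  calc ∑ m, x (σ m) * y (τ m.rev)
      ≤ ∑ m, x (σ m) * y (τ (ρ m).rev) := h.sum_mul_le_sum_mul_comp_perm
    _ = ∑ m, x (σ m) * y (π (σ m)) := by simp [ρ]
    _ = ∑ i, x i * y (π i) := Equiv.sum_comp σ (fun i => x i * y (π i))

open ComplexOrder
theorem trace_mul_ge_sum_ordered_eigenvalues (M : ℕ)
    (A B : Matrix (Fin M) (Fin M) ℂ)
    (hA : A.PosSemidef) (hB : B.PosSemidef)
    (σ τ : Equiv.Perm (Fin M))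
    (hσ : Antitone (hA.1.eigenvalues ∘ σ))
    (hτ : Antitone (hB.1.eigenvalues ∘ τ)) :
    ∑ m : Fin M, hA.1.eigenvalues (σ m) * hB.1.eigenvalues (τ m.rev)
      ≤ ((A * B).trace).re := by
  obtain ⟨S, hS, htrace⟩ := hA.1.exists_mem_doublyStochastic_trace_mul_eq hB.1
  obtain ⟨π, hπ⟩ :=
    exists_perm_sum_mul_comp_le_dotProduct_mulVec hS hA.1.eigenvalues hB.1.eigenvalues
  rw [← RCLike.re_to_complex, htrace, RCLike.ofReal_re]
  exact (Fin.sum_mul_rev_le_sum_mul_comp_perm hσ hτ π).trans hπ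
end

section
/- The η-transform of the Marčenko–Pastur law with ratio β satisfies η_MP(x,β) = 1 − φ(x,β)/(4x) where φ(x,β) = (√(x(1+√β)²+1) − √(x(1−√β)²+1))². In particular for β = 1, ∫_0^4 (1/(1+xt)) · √(t(4−t))/(2πt) dt = 1 − ((√(4x+1) − 1)²)/(4x) for x > 0. -/
/-!
Partial fractions, `1 / (t * (1 + x t)) = 1 / t - 1 / (t + 1 / x)`, reduce the η-transform of
the density `√((t - a)(b - t)) / (2π t)` on `[a, b]` to the integrals
`∫_a^b √((t - a)(b - t)) / (t + c) dt = π ((a + b) / 2 + c - √((a + c)(b + c)))`,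
which follow from an explicit arcsine primitive. At the Marčenko–Pastur edges
`a = (1 - √β)²`, `b = (1 + √β)²` with `β ≥ 1` one has `√b - √a = 2`, and this identity turns the
result into `1 - (√(x b + 1) - √(x a + 1))² / (4x)`.
-/

open Real Set MeasureTheory intervalIntegral

/-- The last term carries the pole at `t = -c`; it vanishes when the pole sits at the edge
`t = a`, where the integral still converges. -/
noncomputable def semicirclePrimitive (a b c t : ℝ) : ℝ :=
  √((t - a) * (b - t)) + ((a + b) / 2 + c) * arcsin ((2 * t - a - b) / (b - a))
    + √((a + c) * (b + c)) *
      arcsin ((2 * (a + c) * (b + c) / (t + c) - (a + b + 2 * c)) / (b - a))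

section
variable {a b c t : ℝ}

lemma hasDerivAt_sqrt_mul_sub (ht : t ∈ Ioo a b) :
    HasDerivAt (fun t => √((t - a) * (b - t)))
      ((a + b - 2 * t) / (2 * √((t - a) * (b - t)))) t := by
  have hpos : 0 < (t - a) * (b - t) := mul_pos (sub_pos.2 ht.1) (sub_pos.2 ht.2)
  have hpoly : HasDerivAt (fun t => (t - a) * (b - t)) (a + b - 2 * t) t :=
    (((hasDerivAt_id t).sub_const a).mul ((hasDerivAt_const t b).sub (hasDerivAt_id t)))
      |>.congr_deriv (by simp only [id, Pi.sub_apply]; ring)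
  exact hpoly.sqrt hpos.ne'

lemma hasDerivAt_arcsin_affine (ht : t ∈ Ioo a b) :
    HasDerivAt (fun t => arcsin ((2 * t - a - b) / (b - a)))
      (1 / √((t - a) * (b - t))) t := by
  have hba : 0 < b - a := sub_pos.2 (ht.1.trans ht.2)
  have hpos : 0 < (t - a) * (b - t) := mul_pos (sub_pos.2 ht.1) (sub_pos.2 ht.2)
  have hlin : HasDerivAt (fun t => (2 * t - a - b) / (b - a)) (2 / (b - a)) t := by
    simpa using ((((hasDerivAt_id t).const_mul 2).sub_const a).sub_const b).div_const (b - a)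
  have hsqrt : √(1 - ((2 * t - a - b) / (b - a)) ^ 2) = 2 * √((t - a) * (b - t)) / (b - a) := by
    rw [← sqrt_sq (by positivity : 0 ≤ 2 * √((t - a) * (b - t)) / (b - a)), div_pow (2 * _),
      mul_pow, sq_sqrt hpos.le]
    congr 1
    field_simp
    ring
  have hne : ∀ s : ℝ, s = 1 ∨ s = -1 → (2 * t - a - b) / (b - a) ≠ s := by
    rintro s (rfl | rfl) <;> rw [ne_eq, div_eq_iff hba.ne'] <;> intro h <;>
      linarith [ht.1, ht.2]
  refine ((hasDerivAt_arcsin (hne _ (.inr rfl)) (hne _ (.inl rfl))).comp t hlin).congr_deriv ?_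
  rw [hsqrt]
  field_simp

lemma hasDerivAt_sqrt_mul_arcsin_moebius (hac : 0 ≤ a + c) (ht : t ∈ Ioo a b) :
    HasDerivAt
      (fun t => √((a + c) * (b + c)) *
        arcsin ((2 * (a + c) * (b + c) / (t + c) - (a + b + 2 * c)) / (b - a)))
      (-((a + c) * (b + c) / (√((t - a) * (b - t)) * (t + c)))) t := by
  rcases hac.eq_or_lt with hac | hac
  · simp only [← hac, zero_mul, sqrt_zero, zero_div, neg_zero]
    exact hasDerivAt_const t 0
  have hba : 0 < b - a := sub_pos.2 (ht.1.trans ht.2)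
  have htc : 0 < t + c := by linarith [ht.1]
  have hbc : 0 < b + c := by linarith [ht.1, ht.2]
  have hpos : 0 < (t - a) * (b - t) := mul_pos (sub_pos.2 ht.1) (sub_pos.2 ht.2)
  set w : ℝ → ℝ := fun t => (2 * (a + c) * (b + c) / (t + c) - (a + b + 2 * c)) / (b - a)
  have hw : HasDerivAt w (-(2 * (a + c) * (b + c)) / (t + c) ^ 2 / (b - a)) t :=
    ((((hasDerivAt_id t).add_const c).inv htc.ne').const_mul (2 * (a + c) * (b + c))
      |>.sub_const (a + b + 2 * c) |>.div_const (b - a)).congr_deriv (by simp only [id]; ring)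
  have hsqrt : √(1 - w t ^ 2)
      = 2 * √((a + c) * (b + c)) * √((t - a) * (b - t)) / ((t + c) * (b - a)) := by
    rw [← sqrt_sq (by positivity : 0 ≤ 2 * √((a + c) * (b + c)) * √((t - a) * (b - t))
      / ((t + c) * (b - a))), div_pow (2 * _ * _), mul_pow, mul_pow, sq_sqrt hpos.le,
      sq_sqrt (mul_pos hac hbc).le]
    congr 1
    simp only [w]
    field_simp
    ring
  have hw1 : 0 < 1 - w t ^ 2 := by
    rw [← sqrt_pos, hsqrt]
    positivity
  have hne : ∀ s : ℝ, s = 1 ∨ s = -1 → w t ≠ s := by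
    rintro s (rfl | rfl) h <;> rw [h] at hw1 <;> norm_num at hw1
  refine (((hasDerivAt_arcsin (hne _ (.inr rfl)) (hne _ (.inl rfl))).comp t hw).const_mul
    _).congr_deriv ?_
  rw [hsqrt]
  field_simp

lemma hasDerivAt_semicirclePrimitive (hac : 0 ≤ a + c) (ht : t ∈ Ioo a b) :
    HasDerivAt (semicirclePrimitive a b c) (√((t - a) * (b - t)) / (t + c)) t := by
  have hpos : 0 < (t - a) * (b - t) := mul_pos (sub_pos.2 ht.1) (sub_pos.2 ht.2)
  have htc : 0 < t + c := by linarith [ht.1]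
  refine (((hasDerivAt_sqrt_mul_sub ht).add ((hasDerivAt_arcsin_affine ht).const_mul _)).add
    (hasDerivAt_sqrt_mul_arcsin_moebius hac ht)).congr_deriv ?_
  field_simp
  linear_combination -2 * sq_sqrt hpos.le

lemma continuousOn_semicirclePrimitive (hac : 0 ≤ a + c) :
    ContinuousOn (semicirclePrimitive a b c) (Icc a b) := by
  have hmoebius : ContinuousOn
      (fun t => √((a + c) * (b + c)) *
        arcsin ((2 * (a + c) * (b + c) / (t + c) - (a + b + 2 * c)) / (b - a))) (Icc a b) := by
    rcases hac.eq_or_lt with hac | hac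
    · simp only [← hac, zero_mul, sqrt_zero]
      exact continuousOn_const
    · exact continuousOn_const.mul <| continuous_arcsin.comp_continuousOn <|
        ((continuousOn_const.div (by fun_prop) fun t ht => by linarith [ht.1]).sub
          continuousOn_const).div_const _
  exact ((continuous_sqrt.comp (by fun_prop)).continuousOn.add
    (continuousOn_const.mul (continuous_arcsin.comp (by fun_prop)).continuousOn)).add hmoebius

lemma semicirclePrimitive_right (hab : a < b) (hac : 0 ≤ a + c) :
    semicirclePrimitive a b c b
      = ((a + b) / 2 + c) * (π / 2) - √((a + c) * (b + c)) * (π / 2) := by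
  have hba : b - a ≠ 0 := (sub_pos.2 hab).ne'
  have hbc : b + c ≠ 0 := by linarith
  have h1 : (2 * b - a - b) / (b - a) = 1 := by field_simp; ring
  have h2 : (2 * (a + c) * (b + c) / (b + c) - (a + b + 2 * c)) / (b - a) = -1 := by
    field_simp; ring
  simp only [semicirclePrimitive, h1, h2, sub_self, mul_zero, sqrt_zero, arcsin_one,
    arcsin_neg_one]
  ring

lemma semicirclePrimitive_left (hab : a < b) (hac : 0 ≤ a + c) :
    semicirclePrimitive a b c a
      = -(((a + b) / 2 + c) * (π / 2)) + √((a + c) * (b + c)) * (π / 2) := by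
  have hba : b - a ≠ 0 := (sub_pos.2 hab).ne'
  have h1 : (2 * a - a - b) / (b - a) = -1 := by field_simp; ring
  have h2 : √((a + c) * (b + c)) *
      arcsin ((2 * (a + c) * (b + c) / (a + c) - (a + b + 2 * c)) / (b - a))
      = √((a + c) * (b + c)) * (π / 2) := by
    rcases hac.eq_or_lt with hac | hac
    · simp [← hac]
    · rw [← arcsin_one]
      congr 2
      field_simp
      ring
  simp only [semicirclePrimitive, h1, h2, sub_self, zero_mul, sqrt_zero, arcsin_neg_one]
  ring

lemma sqrt_mul_sub_div_add_nonneg (hac : 0 ≤ a + c) (ht : t ∈ Ioo a b) :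
    0 ≤ √((t - a) * (b - t)) / (t + c) :=
  div_nonneg (sqrt_nonneg _) (by linarith [ht.1])

lemma intervalIntegrable_sqrt_mul_sub_div_add (hab : a < b) (hac : 0 ≤ a + c) :
    IntervalIntegrable (fun t => √((t - a) * (b - t)) / (t + c)) volume a b := by
  refine intervalIntegrable_deriv_of_nonneg (g := semicirclePrimitive a b c) ?_ ?_ ?_
  · rw [uIcc_of_le hab.le]
    exact continuousOn_semicirclePrimitive hac
  all_goals
    rw [min_eq_left hab.le, max_eq_right hab.le]
    intro t ht
  · exact hasDerivAt_semicirclePrimitive hac ht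
  · exact sqrt_mul_sub_div_add_nonneg hac ht

theorem integral_sqrt_mul_sub_div_add (hab : a < b) (hac : 0 ≤ a + c) :
    ∫ t in a..b, √((t - a) * (b - t)) / (t + c)
      = π * ((a + b) / 2 + c - √((a + c) * (b + c))) := by
  rw [integral_eq_sub_of_hasDerivAt_of_le hab.le (continuousOn_semicirclePrimitive hac)
    (fun t ht => hasDerivAt_semicirclePrimitive hac ht)
    (intervalIntegrable_sqrt_mul_sub_div_add hab hac),
    semicirclePrimitive_right hab hac, semicirclePrimitive_left hab hac]
  ring

lemma integral_eta_semicircle {x : ℝ} (ha : 0 ≤ a) (hab : a < b) (hx : 0 < x) :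
    ∫ t in a..b, (1 / (1 + x * t)) * (√((t - a) * (b - t)) / (2 * π * t))
      = (√((x * a + 1) * (x * b + 1)) - x * √(a * b) - 1) / (2 * x) := by
  have ha0 : 0 ≤ a + 0 := by simpa using ha
  have hax : 0 ≤ a + 1 / x := by positivity
  have hpartial : EqOn (fun t => (1 / (1 + x * t)) * (√((t - a) * (b - t)) / (2 * π * t)))
      (fun t => (2 * π)⁻¹ * (√((t - a) * (b - t)) / (t + 0)
        - √((t - a) * (b - t)) / (t + 1 / x))) (uIoo a b) := by
    intro t ht
    rw [uIoo_of_le hab.le] at ht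
    have ht0 : 0 < t := ha.trans_lt ht.1
    field_simp
    ring
  rw [integral_congr_uIoo hpartial, intervalIntegral.integral_const_mul,
    intervalIntegral.integral_sub (intervalIntegrable_sqrt_mul_sub_div_add hab ha0)
      (intervalIntegrable_sqrt_mul_sub_div_add hab hax),
    integral_sqrt_mul_sub_div_add hab ha0, integral_sqrt_mul_sub_div_add hab hax]
  have hscale : √((a + 1 / x) * (b + 1 / x)) = √((x * a + 1) * (x * b + 1)) / x := by
    rw [show (a + 1 / x) * (b + 1 / x) = (x * a + 1) * (x * b + 1) / x ^ 2 by field_simp,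
      sqrt_div' _ (sq_nonneg x), sqrt_sq hx.le]
  rw [hscale]
  simp only [add_zero]
  field_simp
  ring

lemma integral_eta_semicircle_of_sqrt_sub_sqrt_eq_two {x : ℝ} (ha : 0 ≤ a) (hab : √b - √a = 2)
    (hx : 0 < x) :
    ∫ t in a..b, (1 / (1 + x * t)) * (√((t - a) * (b - t)) / (2 * π * t))
      = 1 - (√(x * b + 1) - √(x * a + 1)) ^ 2 / (4 * x) := by
  have hb : 0 ≤ b := (sqrt_pos.1 (by linarith [sqrt_nonneg a])).le
  have hlt : a < b := (sqrt_lt_sqrt_iff ha).1 (by linarith)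
  rw [integral_eta_semicircle ha hlt hx, sqrt_mul (by positivity), sqrt_mul ha]
  have hxa := sq_sqrt (by positivity : 0 ≤ x * a + 1)
  have hxb := sq_sqrt (by positivity : 0 ≤ x * b + 1)
  field_simp
  linear_combination 2 * hxa + 2 * hxb - 2 * x * sq_sqrt ha - 2 * x * sq_sqrt hb
    + 2 * x * (√b - √a + 2) * hab

end

theorem mp_eta_transform (x : ℝ) (hx : 0 < x) :
    (∀ β : ℝ, 1 ≤ β →
      ∫ t in ((1 - Real.sqrt β) ^ 2)..((1 + Real.sqrt β) ^ 2),
          (1 / (1 + x * t)) *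
            (Real.sqrt ((t - (1 - Real.sqrt β) ^ 2) * ((1 + Real.sqrt β) ^ 2 - t))
              / (2 * π * t))
        = 1 - (Real.sqrt (x * (1 + Real.sqrt β) ^ 2 + 1)
                - Real.sqrt (x * (1 - Real.sqrt β) ^ 2 + 1)) ^ 2 / (4 * x)) ∧
    (∫ t in (0 : ℝ)..4,
        (1 / (1 + x * t)) * (Real.sqrt (t * (4 - t)) / (2 * π * t))
      = 1 - (Real.sqrt (4 * x + 1) - 1) ^ 2 / (4 * x)) := by
  constructor
  · intro β hβ
    have hr : 1 ≤ √β := one_le_sqrt.2 hβ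
    refine integral_eta_semicircle_of_sqrt_sub_sqrt_eq_two (sq_nonneg _) ?_ hx
    rw [sqrt_sq (by linarith), sqrt_sq_eq_abs, abs_of_nonpos (by linarith)]
    ring
  · have hsqrt : √4 - √0 = (2 : ℝ) := by
      rw [show (4 : ℝ) = 2 ^ 2 by norm_num, sqrt_sq zero_le_two, sqrt_zero, sub_zero]
    simpa [mul_comm x 4] using
      integral_eta_semicircle_of_sqrt_sub_sqrt_eq_two le_rfl hsqrt hx
end
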